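/- arXiv:1908.01453 — 2 statements merged into one kernel-verified Lean document; each statement's English description precedes it below -/
import Mathlib

section
/- Let f : ℝ → ℝ be continuous on [a, ∞), and for a function g define (J g)(x) = ∫_a^x g(t) dt. Then for every integer n ≥ 1 and every x ≥ a, the n-th iterate of J applied to f satisfies the Cauchy formula for repeated integration: (Jⁿ f)(x) = (1/(n−1)!) ∫_a^x (x − t)^{n−1} f(t) dt. -/
/-!
Integrating by parts against the primitive `J g` (which vanishes at `a`) gives
`(n + 1) ∫_a^x (x - t)^n (J g)(t) dt = ∫_a^x (x - t)^(n+1) g(t) dt`, so the formula for `n + 1`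
follows from the formula for `n` applied to `J g`. Since `Jⁿ f` on `[a, ∞)` only sees `f` on
`[a, ∞)`, we may replace `f` by the globally continuous `t ↦ f (max t a)`.
-/

open intervalIntegral MeasureTheory Set
open scoped Nat Interval

section primitiveFrom

variable {E : Type*} [NormedAddCommGroup E] [NormedSpace ℝ E]

noncomputable def primitiveFrom (a : ℝ) (g : ℝ → E) (x : ℝ) : E := ∫ t in a..x, g t

theorem primitiveFrom_self (a : ℝ) (g : ℝ → E) : primitiveFrom a g a = 0 :=
  integral_same

variable {a : ℝ} {g : ℝ → E}

theorem hasDerivAt_primitiveFrom [CompleteSpace E] (hg : Continuous g) (x : ℝ) :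
    HasDerivAt (primitiveFrom a g) (g x) x :=
  hg.integral_hasStrictDerivAt a x |>.hasDerivAt

theorem eqOn_iterate_primitiveFrom {f : ℝ → E} (hfg : EqOn f g (Ici a)) (n : ℕ) :
    EqOn ((primitiveFrom a)^[n] f) ((primitiveFrom a)^[n] g) (Ici a) := by
  induction n with
  | zero => exact hfg
  | succ n ih =>
    intro x hx
    simp only [Function.iterate_succ_apply']
    refine integral_congr fun t ht => ih ?_
    rw [uIcc_of_le hx] at ht
    exact ht.1

theorem integral_pow_smul_primitiveFrom [CompleteSpace E] (hg : Continuous g) (x : ℝ) (n : ℕ) :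
    ((n : ℝ) + 1) • ∫ t in a..x, (x - t) ^ n • primitiveFrom a g t
      = ∫ t in a..x, (x - t) ^ (n + 1) • g t := by
  have hu : ∀ t ∈ [[a, x]],
      HasDerivAt (fun t => (x - t) ^ (n + 1)) (-(((n : ℝ) + 1) * (x - t) ^ n)) t := fun t _ => by
    simpa [mul_comm] using ((hasDerivAt_id t).const_sub x).fun_pow (n + 1)
  have hu' : IntervalIntegrable (fun t => -(((n : ℝ) + 1) * (x - t) ^ n)) volume a x := by
    apply Continuous.intervalIntegrable
    fun_prop
  rw [integral_smul_deriv_eq_deriv_smul hu (fun t _ => hasDerivAt_primitiveFrom hg t) hu'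
    (hg.intervalIntegrable a x), primitiveFrom_self a g, ← intervalIntegral.integral_smul]
  simp [smul_smul]

theorem iterate_primitiveFrom_succ [CompleteSpace E] (hg : Continuous g) (n : ℕ) (x : ℝ) :
    (primitiveFrom a)^[n + 1] g x = (n ! : ℝ)⁻¹ • ∫ t in a..x, (x - t) ^ n • g t := by
  induction n generalizing g with
  | zero => simp [primitiveFrom]
  | succ n ih =>
    have hJg : Continuous (primitiveFrom a g) :=
      continuous_primitive (fun _ _ => hg.intervalIntegrable _ _) a
    rw [Function.iterate_succ_apply, ih hJg, ← integral_pow_smul_primitiveFrom hg,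
      smul_smul, Nat.factorial_succ, Nat.cast_mul, Nat.cast_succ]
    congr 1
    have : (n ! : ℝ) ≠ 0 := by positivity
    field_simp

end primitiveFrom

/-- Cauchy formula for repeated integration: if `f` is continuous on `[a, ∞)` and
`(J g)(x) = ∫_a^x g(t) dt`, then for every `n ≥ 1` and `x ≥ a`,
`(Jⁿ f)(x) = (1/(n−1)!) ∫_a^x (x − t)^{n−1} f(t) dt`. -/
theorem cauchy_repeated_integration
    (a : ℝ) (f : ℝ → ℝ) (hf : ContinuousOn f (Set.Ici a))
    (J : (ℝ → ℝ) → (ℝ → ℝ)) (hJ : ∀ g : ℝ → ℝ, ∀ x : ℝ, J g x = ∫ t in a..x, g t) :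
    ∀ n : ℕ, 1 ≤ n → ∀ x : ℝ, a ≤ x →
      (J^[n] f) x
        = (1 / ((n - 1).factorial : ℝ)) * ∫ t in a..x, (x - t) ^ (n - 1) * f t := by
  obtain rfl : J = primitiveFrom (E := ℝ) a := funext₂ hJ
  intro n hn x hx
  obtain ⟨n, rfl⟩ := Nat.exists_eq_add_of_le' hn
  set g : ℝ → ℝ := fun y => f (max y a)
  have hg : Continuous g :=
    hf.comp_continuous (continuous_id.max continuous_const) fun y => le_max_right y a
  have hfg : EqOn f g (Ici a) := fun y hy => by simp [g, max_eq_left (mem_Ici.mp hy)]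
  rw [eqOn_iterate_primitiveFrom hfg _ hx, iterate_primitiveFrom_succ hg, Nat.add_sub_cancel,
    one_div, smul_eq_mul]
  congr 1
  refine integral_congr fun t ht => ?_
  rw [uIcc_of_le hx] at ht
  simp only [hfg ht.1, smul_eq_mul]
end

section
/- Let f : ℝ → ℝ be continuous on [a, ∞). For α > 0 define the Riemann–Liouville fractional integral (I_a^α f)(x) = (1/Γ(α)) ∫_a^x (x − t)^{α−1} f(t) dt. Then the fractional integrals of f satisfy the semigroup property: for all α > 0, β > 0 and all x ≥ a, (I_a^α (I_a^β f))(x) = (I_a^{α+β} f)(x). -/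
/-!
Written out, `I^α (I^β f) x` is an iterated integral over the triangle `a < s ≤ t ≤ x`.
Since `f` is bounded on `[a, x]` and the kernels `(x - t) ^ (α - 1)`, `(t - s) ^ (β - 1)` are
integrable, Fubini applies; after exchanging the order of integration the inner integral
`∫ t in s..x, (x - t) ^ (α - 1) * (t - s) ^ (β - 1)` is, by the substitution `t = s + (x - s) v`,
the Beta integral `Γ(α) Γ(β) / Γ(α + β) * (x - s) ^ (α + β - 1)`.
-/

open Real MeasureTheory Set intervalIntegral

lemma intervalIntegrable_sub_rpow {γ : ℝ} (hγ : 0 < γ) (x a b : ℝ) :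
    IntervalIntegrable (fun t => (x - t) ^ (γ - 1)) volume a b := by
  simpa using
    (intervalIntegrable_rpow' (r := γ - 1) (by linarith) (a := x - a) (b := x - b)).comp_sub_left x

lemma integral_sub_rpow {γ : ℝ} (hγ : 0 < γ) (a t : ℝ) :
    ∫ s in a..t, (t - s) ^ (γ - 1) = (t - a) ^ γ / γ := by
  rw [integral_comp_sub_left (fun u => u ^ (γ - 1)) t, sub_self,
    integral_rpow (Or.inl (by linarith)), sub_add_cancel, zero_rpow hγ.ne', sub_zero]

lemma integral_sub_rpow_mul_rpow {α β c : ℝ} (hα : 0 < α) (hβ : 0 < β) (hc : 0 < c) :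
    ∫ u in (0 : ℝ)..c, (c - u) ^ (α - 1) * u ^ (β - 1) =
      ProbabilityTheory.beta α β * c ^ (α + β - 1) := by
  apply Complex.ofReal_injective
  have hcast : ∀ u ∈ uIcc 0 c, (((c - u) ^ (α - 1) * u ^ (β - 1) : ℝ) : ℂ) =
      (u : ℂ) ^ ((β : ℂ) - 1) * ((c : ℂ) - u) ^ ((α : ℂ) - 1) := by
    intro u hu
    rw [uIcc_of_le hc.le] at hu
    push_cast [Complex.ofReal_cpow hu.1, Complex.ofReal_cpow (sub_nonneg.2 hu.2)]
    ring
  rw [← integral_ofReal, integral_congr hcast, Complex.betaIntegral_scaled β α hc,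
    Complex.betaIntegral_eq_Gamma_mul_div _ _ (by simpa) (by simpa), ProbabilityTheory.beta]
  push_cast [Complex.ofReal_cpow hc.le, ← Complex.Gamma_ofReal]
  rw [add_comm (β : ℂ)]
  ring

lemma integral_sub_rpow_mul_sub_rpow {α β s x : ℝ} (hα : 0 < α) (hβ : 0 < β) (hs : s < x) :
    ∫ t in s..x, (x - t) ^ (α - 1) * (t - s) ^ (β - 1) =
      ProbabilityTheory.beta α β * (x - s) ^ (α + β - 1) := by
  have h := integral_comp_sub_right (fun u => ((x - s) - u) ^ (α - 1) * u ^ (β - 1)) s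
    (a := s) (b := x)
  simp only [sub_sub_sub_cancel_right, sub_self] at h
  rw [h, integral_sub_rpow_mul_rpow hα hβ (sub_pos.2 hs)]

variable {E : Type*} [NormedAddCommGroup E] [NormedSpace ℝ E]

lemma setIntegral_Ioc_indicator_Iic {a t x : ℝ} (hat : a ≤ t) (htx : t ≤ x) (h : ℝ → E) :
    ∫ s in Ioc a x, (Iic t).indicator h s = ∫ s in a..t, h s := by
  rw [setIntegral_indicator measurableSet_Iic, Ioc_inter_Iic, min_eq_right htx,
    integral_of_le hat]

lemma setIntegral_Ioc_indicator_Ici {a s x : ℝ} (has : a < s) (hsx : s ≤ x) (h : ℝ → E) :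
    ∫ t in Ioc a x, (Ici s).indicator h t = ∫ t in s..x, h t := by
  have hset : Ioc a x ∩ Ici s = Icc s x := by
    ext t
    simp only [mem_inter_iff, mem_Ioc, mem_Ici, mem_Icc]
    exact ⟨fun ⟨⟨_, htx⟩, hst⟩ => ⟨hst, htx⟩, fun ⟨hst, htx⟩ => ⟨⟨has.trans_le hst, htx⟩, hst⟩⟩
  rw [setIntegral_indicator measurableSet_Ici, hset, integral_Icc_eq_integral_Ioc,
    integral_of_le hsx]

theorem integral_integral_swap_of_le {a b : ℝ} (hab : a ≤ b) {K : ℝ → ℝ → E}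
    (hK : Integrable ({p : ℝ × ℝ | p.2 ≤ p.1}.indicator (Function.uncurry K))
      ((volume.restrict (Ioc a b)).prod (volume.restrict (Ioc a b)))) :
    ∫ t in a..b, ∫ s in a..t, K t s = ∫ s in a..b, ∫ t in s..b, K t s := by
  rw [integral_of_le hab, integral_of_le hab]
  calc ∫ t in Ioc a b, ∫ s in a..t, K t s
      = ∫ t in Ioc a b, ∫ s in Ioc a b, (Iic t).indicator (K t) s :=
        setIntegral_congr_fun measurableSet_Ioc fun t ht =>
          (setIntegral_Ioc_indicator_Iic ht.1.le ht.2 _).symm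
    _ = ∫ s in Ioc a b, ∫ t in Ioc a b, (Ici s).indicator (K · s) t :=
        integral_integral_swap hK
    _ = ∫ s in Ioc a b, ∫ t in s..b, K t s :=
        setIntegral_congr_fun measurableSet_Ioc fun s hs =>
          setIntegral_Ioc_indicator_Ici hs.1 hs.2 _

lemma integral_norm_sub_rpow_mul_le {β a t M : ℝ} (hβ : 0 < β) (hat : a ≤ t) {g : ℝ → ℝ}
    (hg : ContinuousOn g (Icc a t)) (hM : ∀ s ∈ Icc a t, ‖g s‖ ≤ M) :
    ∫ s in a..t, ‖(t - s) ^ (β - 1) * g s‖ ≤ M * ((t - a) ^ β / β) := by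
  have hk := intervalIntegrable_sub_rpow hβ t a t
  calc ∫ s in a..t, ‖(t - s) ^ (β - 1) * g s‖
      ≤ ∫ s in a..t, (t - s) ^ (β - 1) * M := by
        refine integral_mono_on hat ?_ (hk.mul_const M) fun s hs => ?_
        · exact (hk.mul_continuousOn (by rwa [uIcc_of_le hat])).norm
        rw [norm_mul, norm_of_nonneg (rpow_nonneg (sub_nonneg.2 hs.2) _)]
        exact mul_le_mul_of_nonneg_left (hM s hs) (rpow_nonneg (sub_nonneg.2 hs.2) _)
    _ = M * ((t - a) ^ β / β) := by
        rw [intervalIntegral.integral_mul_const, integral_sub_rpow hβ, mul_comm]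

lemma integrable_indicator_sub_rpow_mul_sub_rpow_mul {α β a x : ℝ} (hα : 0 < α) (hβ : 0 < β)
    (hax : a ≤ x) {g : ℝ → ℝ} (hg : ContinuousOn g (Icc a x)) :
    Integrable ({p : ℝ × ℝ | p.2 ≤ p.1}.indicator
        (Function.uncurry fun t s => (x - t) ^ (α - 1) * ((t - s) ^ (β - 1) * g s)))
      ((volume.restrict (Ioc a x)).prod (volume.restrict (Ioc a x))) := by
  set μ := volume.restrict (Ioc a x)
  set F := {p : ℝ × ℝ | p.2 ≤ p.1}.indicator
    (Function.uncurry fun t s => (x - t) ^ (α - 1) * ((t - s) ^ (β - 1) * g s))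
  have hg' : ContinuousOn g (uIcc a x) := by rwa [uIcc_of_le hax]
  have hFm : AEStronglyMeasurable F (μ.prod μ) := by
    have hgμ : AEStronglyMeasurable g μ :=
      (hg.aestronglyMeasurable measurableSet_Icc).mono_measure
        (Measure.restrict_mono Ioc_subset_Icc_self le_rfl)
    refine AEStronglyMeasurable.indicator ?_ (measurableSet_le measurable_snd measurable_fst)
    exact ((measurable_const.sub measurable_fst).pow_const _).aestronglyMeasurable.mul
      (((measurable_fst.sub measurable_snd).pow_const _).aestronglyMeasurable.mul hgμ.comp_snd)
  obtain ⟨M, hM⟩ := isCompact_Icc.exists_bound_of_continuousOn hg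
  refine (integrable_prod_iff hFm).2 ⟨.of_forall fun t => ?_, ?_⟩
  · refine Integrable.indicator (s := Iic t) ?_ measurableSet_Iic
    exact (intervalIntegrable_iff_integrableOn_Ioc_of_le hax).1
      (((intervalIntegrable_sub_rpow hβ t a x).mul_continuousOn hg').const_mul
        ((x - t) ^ (α - 1)))
  refine Integrable.mono' (g := fun t => (x - t) ^ (α - 1) * (M * ((t - a) ^ β / β))) ?_
    hFm.norm.integral_prod_right' ?_
  · refine (intervalIntegrable_iff_integrableOn_Ioc_of_le hax).1
      ((intervalIntegrable_sub_rpow hα x a x).mul_continuousOn ?_)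
    exact (continuous_const.mul (((continuous_rpow_const hβ.le).comp
      (continuous_id.sub continuous_const)).div_const β)).continuousOn
  refine (ae_restrict_iff' measurableSet_Ioc).2 (.of_forall fun t ⟨hat, htx⟩ => ?_)
  have hxt : 0 ≤ (x - t) ^ (α - 1) := rpow_nonneg (sub_nonneg.2 htx) _
  have hslice : (fun s => ‖F (t, s)‖) =
      (Iic t).indicator fun s => (x - t) ^ (α - 1) * ‖(t - s) ^ (β - 1) * g s‖ := by
    ext s
    by_cases hst : s ≤ t
    · simp only [F, mem_ofPred_eq, mem_Iic, hst, indicator_of_mem, Function.uncurry_apply_pair,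
        norm_mul, norm_of_nonneg hxt]
    · simp only [F, mem_ofPred_eq, mem_Iic, hst, not_false_eq_true, indicator_of_notMem, norm_zero]
  rw [norm_of_nonneg (integral_nonneg fun _ => norm_nonneg _), hslice,
    setIntegral_Ioc_indicator_Iic hat.le htx, intervalIntegral.integral_const_mul]
  exact mul_le_mul_of_nonneg_left (integral_norm_sub_rpow_mul_le hβ hat.le
    (hg.mono (Icc_subset_Icc_right htx)) fun s hs => hM s ⟨hs.1, hs.2.trans htx⟩) hxt

theorem integral_sub_rpow_mul_integral_sub_rpow_mul {α β a x : ℝ} (hα : 0 < α) (hβ : 0 < β)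
    (hax : a ≤ x) {g : ℝ → ℝ} (hg : ContinuousOn g (Icc a x)) :
    ∫ t in a..x, (x - t) ^ (α - 1) * ∫ s in a..t, (t - s) ^ (β - 1) * g s =
      ProbabilityTheory.beta α β * ∫ s in a..x, (x - s) ^ (α + β - 1) * g s := by
  calc ∫ t in a..x, (x - t) ^ (α - 1) * ∫ s in a..t, (t - s) ^ (β - 1) * g s
      = ∫ t in a..x, ∫ s in a..t, (x - t) ^ (α - 1) * ((t - s) ^ (β - 1) * g s) := by
        simp_rw [intervalIntegral.integral_const_mul]
    _ = ∫ s in a..x, ∫ t in s..x, (x - t) ^ (α - 1) * ((t - s) ^ (β - 1) * g s) :=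
        integral_integral_swap_of_le hax
          (integrable_indicator_sub_rpow_mul_sub_rpow_mul hα hβ hax hg)
    _ = ∫ s in a..x, ProbabilityTheory.beta α β * ((x - s) ^ (α + β - 1) * g s) := by
        -- at `s = x` the two sides differ when `α + β = 1`, since `0 ^ 0 = 1`
        refine integral_congr_ae ?_
        filter_upwards [Measure.ae_ne volume x] with s hsx hs
        have hs : s < x := lt_of_le_of_ne (uIoc_of_le hax ▸ hs).2 hsx
        simp_rw [← mul_assoc, intervalIntegral.integral_mul_const,
          integral_sub_rpow_mul_sub_rpow hα hβ hs]
    _ = ProbabilityTheory.beta α β * ∫ s in a..x, (x - s) ^ (α + β - 1) * g s :=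
        intervalIntegral.integral_const_mul _ _

noncomputable def riemannLiouville (a γ : ℝ) (g : ℝ → ℝ) (x : ℝ) : ℝ :=
  1 / Gamma γ * ∫ t in a..x, (x - t) ^ (γ - 1) * g t

theorem riemannLiouville_riemannLiouville {α β a x : ℝ} (hα : 0 < α) (hβ : 0 < β) (hax : a ≤ x)
    {g : ℝ → ℝ} (hg : ContinuousOn g (Icc a x)) :
    riemannLiouville a α (riemannLiouville a β g) x = riemannLiouville a (α + β) g x := by
  simp only [riemannLiouville, mul_left_comm _ (1 / Gamma β)]
  rw [intervalIntegral.integral_const_mul,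
    integral_sub_rpow_mul_integral_sub_rpow_mul hα hβ hax hg, ProbabilityTheory.beta]
  have := (Gamma_pos_of_pos hα).ne'
  have := (Gamma_pos_of_pos hβ).ne'
  have := (Gamma_pos_of_pos (add_pos hα hβ)).ne'
  field_simp

/-- Semigroup property of the Riemann–Liouville fractional integral
`(I_a^α f)(x) = (1/Γ(α)) ∫_a^x (x − t)^{α−1} f(t) dt` for `f` continuous on `[a, ∞)`:
`I_a^α (I_a^β f) = I_a^{α+β} f` on `[a, ∞)`. -/
theorem riemann_liouville_semigroup
    (a : ℝ) (f : ℝ → ℝ) (hf : ContinuousOn f (Set.Ici a))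
    (I : ℝ → (ℝ → ℝ) → (ℝ → ℝ))
    (hI : ∀ (γ : ℝ) (g : ℝ → ℝ) (x : ℝ),
      I γ g x = (1 / Real.Gamma γ) * ∫ t in a..x, (x - t) ^ (γ - 1) * g t) :
    ∀ α > (0 : ℝ), ∀ β > (0 : ℝ), ∀ x : ℝ, a ≤ x →
      I α (I β f) x = I (α + β) f x := by
  intro α hα β hβ x hax
  obtain rfl : I = riemannLiouville a := funext fun γ => funext fun g => funext (hI γ g)
  exact riemannLiouville_riemannLiouville hα hβ hax (hf.mono Icc_subset_Ici_self)
end
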